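/- Fourier transform expression for the coherent term: Let σ = e^{−βH}/tr(e^{−βH}) be the Gibbs state of a Hermitian matrix H at inverse temperature β > 0, let P be Hermitian, and let G^P be the coherent term defined in the eigenbasis of σ (eigenvalues σ_i) by G^P_{ij} = −i·((σ_i^{1/2} − σ_j^{1/2})/(2·σ_i^{1/4}·σ_j^{1/4}·(σ_i^{1/2} + σ_j^{1/2})))·Σ_k σ_k^{1/2} P_{ik} P_{kj}. Then G^P = ∫_{−∞}^{∞} e^{iHω}·((1/(2i))·[P σ^{1/2} P, σ^{−1/2}])·e^{−iHω}·f(ω) dω, where f(ω) = 1/(β·cosh(2πω/β)). -/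

import Mathlib

open scoped BigOperators
open Classical
open scoped ComplexOrder

noncomputable section

/-- Index type for the standard basis of the `n`-qubit Hilbert space `(ℂ²)^{⊗n}`. -/
abbrev QIdx (n : ℕ) := Fin n → Fin 2

/-- Operators (matrices) on the `n`-qubit Hilbert space `(ℂ²)^{⊗n}`. -/
abbrev QMat (n : ℕ) := Matrix (QIdx n) (QIdx n) ℂ

/-- The trace norm (Schatten 1-norm) of a matrix: `‖A‖₁ = tr √(AᴴA)`. -/
noncomputable def traceNorm {I : Type} [Fintype I] [DecidableEq I] (A : Matrix I I ℂ) : ℝ :=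
  (let hA := (Matrix.posSemidef_conjTranspose_mul_self A).1
   (hA.eigenvectorUnitary : Matrix I I ℂ) *
     Matrix.diagonal (fun i => ((Real.sqrt (hA.eigenvalues i) : ℝ) : ℂ)) *
     (star hA.eigenvectorUnitary : Matrix I I ℂ)).trace.re

/-- The operator norm (spectral norm) of a complex matrix. -/
noncomputable def opNorm {I : Type} [Fintype I] [DecidableEq I] (A : Matrix I I ℂ) : ℝ :=
  ‖Matrix.toEuclideanCLM (𝕜 := ℂ) A‖

/-- The partial trace of an `n`-qubit operator over the qubit at site `i`, as an operator
on the remaining qubits. -/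
noncomputable def ptraceSite {n : ℕ} (i : Fin n) (X : QMat n) :
    Matrix ({j : Fin n // j ≠ i} → Fin 2) ({j : Fin n // j ≠ i} → Fin 2) ℂ :=
  fun a b => ∑ s : Fin 2,
    X (fun j => if h : j = i then s else a ⟨j, h⟩) (fun j => if h : j = i then s else b ⟨j, h⟩)

/-- A transport plan for a (traceless Hermitian) operator `X`: a decomposition
`X = Σ_i X_i` into Hermitian matrices with `tr_i(X_i) = 0`. -/
structure IsTransportPlan {n : ℕ} (X : QMat n) (Xs : Fin n → QMat n) : Prop where
  herm : ∀ i, (Xs i).IsHermitian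
  traceless : ∀ i, (Xs i).trace = 0
  sum_eq : ∑ i, Xs i = X
  ptrace_eq : ∀ i, ptraceSite i (Xs i) = 0

/-- The quantum Wasserstein norm of order 1 of De Palma–Marvian–Trevisan–Lloyd. -/
noncomputable def wnorm {n : ℕ} (X : QMat n) : ℝ :=
  sInf {c : ℝ | ∃ Xs : Fin n → QMat n, IsTransportPlan X Xs ∧ c = ∑ i, traceNorm (Xs i) / 2}

/-- A density matrix: positive semidefinite with unit trace. -/
def IsDensity {n : ℕ} (ρ : QMat n) : Prop := ρ.PosSemidef ∧ ρ.trace = 1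

/-- The Dobrushin influence matrix of a map `Φ = Φ₁ + ⋯ + Φ_n`:
`D_{ij} = max { ‖Φ_i(ρ − ϱ)‖_{W1} : ρ, ϱ density matrices with tr_j(ρ − ϱ) = 0 }`. -/
noncomputable def dobrushin {n : ℕ} (Φs : Fin n → (QMat n → QMat n)) :
    Matrix (Fin n) (Fin n) ℝ :=
  fun i j => sSup {w : ℝ | ∃ ρ ϱ : QMat n, IsDensity ρ ∧ IsDensity ϱ ∧
    ptraceSite j (ρ - ϱ) = 0 ∧ w = wnorm (Φs i (ρ - ϱ))}

/-- The `1 → 1` norm of a real matrix: the maximum column `ℓ₁`-norm. -/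
noncomputable def norm11 {n : ℕ} (D : Matrix (Fin n) (Fin n) ℝ) : ℝ :=
  ⨆ j, ∑ i, |D i j|

/-- `Q` is an update matrix for `Φ` if `Φ` maps any transport plan with cost vector `x`
to a transport plan with cost vector entrywise at most `Q x`. -/
def IsUpdateMatrix {n : ℕ} (Q : Matrix (Fin n) (Fin n) ℝ) (Φ : QMat n → QMat n) : Prop :=
  ∀ (X : QMat n) (Xs : Fin n → QMat n), IsTransportPlan X Xs →
    ∃ Ys : Fin n → QMat n, IsTransportPlan (Φ X) Ys ∧
      ∀ j, traceNorm (Ys j) / 2 ≤ Q.mulVec (fun i => traceNorm (Xs i) / 2) j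

/-! ### Hamiltonian combinatorics -/

/-- `M` is supported on the set of qubits `S` (i.e. `M = M_S ⊗ Id`). -/
def SupportedOn {n : ℕ} (S : Finset (Fin n)) (M : QMat n) : Prop :=
  (∀ a b : QIdx n, (∃ j, j ∉ S ∧ a j ≠ b j) → M a b = 0) ∧
  (∀ a b a' b' : QIdx n, (∀ j ∈ S, a j = a' j) → (∀ j ∈ S, b j = b' j) →
     (∀ j ∉ S, a j = b j) → (∀ j ∉ S, a' j = b' j) → M a b = M a' b')

/-- The support of an operator: the minimal set of qubits on which it acts nontrivially. -/
noncomputable def supp {n : ℕ} (M : QMat n) : Finset (Fin n) :=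
  (Finset.univ.filter fun S : Finset (Fin n) => SupportedOn S M).inf id

/-- The interaction graph of a local Hamiltonian: two distinct sites are adjacent iff
some term's support contains both. -/
def interGraph {n m : ℕ} (Hterm : Fin m → QMat n) : SimpleGraph (Fin n) where
  Adj i j := i ≠ j ∧ ∃ a, i ∈ supp (Hterm a) ∧ j ∈ supp (Hterm a)
  symm := by
    constructor
    rintro i j ⟨hij, a, hi, hj⟩
    exact ⟨hij.symm, a, hj, hi⟩
  loopless := by
    constructor
    rintro i ⟨hii, -⟩
    exact hii rfl

/-- The graph distance on sites induced by the interaction hypergraph. -/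
noncomputable def hamDist {n m : ℕ} (Hterm : Fin m → QMat n) (i j : Fin n) : ℕ :=
  (interGraph Hterm).dist i j

/-- The ball of radius `r` around site `i` in the interaction graph distance. -/
noncomputable def ballH {n m : ℕ} (Hterm : Fin m → QMat n) (i : Fin n) (r : ℕ) :
    Finset (Fin n) :=
  Finset.univ.filter fun j => hamDist Hterm i j ≤ r

/-- Distance from a site to a set of sites. -/
noncomputable def distToSet {n m : ℕ} (Hterm : Fin m → QMat n) (j : Fin n)
    (S : Finset (Fin n)) : ℕ :=
  sInf {r : ℕ | ∃ i ∈ S, hamDist Hterm j i = r}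

/-- Distance between two sets of sites. -/
noncomputable def setDist {n m : ℕ} (Hterm : Fin m → QMat n) (S T : Finset (Fin n)) : ℕ :=
  sInf {r : ℕ | ∃ i ∈ S, ∃ j ∈ T, hamDist Hterm i j = r}

/-- For `S ⊆ [n]`, the real matrix `E_S` with `(E_S)_{uv} = 1` iff `u, v ∈ S`. -/
def ESet {n : ℕ} (S : Finset (Fin n)) : Matrix (Fin n) (Fin n) ℝ :=
  fun u v => if u ∈ S ∧ v ∈ S then 1 else 0

/-- `S_a`: the union of the supports of the terms appearing in the sequence `a`. -/
noncomputable def SOf {n m : ℕ} (Hterm : Fin m → QMat n) {s : ℕ} (a : Fin s → Fin m) :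
    Finset (Fin n) :=
  Finset.univ.biUnion fun ℓ => supp (Hterm (a ℓ))

/-- `a` is a cluster from the set `S₀`: each term's support intersects `S₀` together with
the supports of the previous terms. -/
def IsClusterFrom {n m : ℕ} (Hterm : Fin m → QMat n) (S0 : Finset (Fin n)) {s : ℕ}
    (a : Fin s → Fin m) : Prop :=
  ∀ ℓ : Fin s, ∃ j ∈ supp (Hterm (a ℓ)),
    j ∈ S0 ∨ ∃ p : Fin s, p < ℓ ∧ j ∈ supp (Hterm (a p))

/-- The ball of radius `r` around a set of sites. -/
noncomputable def ballOfSet {n m : ℕ} (Hterm : Fin m → QMat n) (S : Finset (Fin n)) (r : ℕ) :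
    Finset (Fin n) :=
  Finset.univ.filter fun j => distToSet Hterm j S ≤ r

/-! ### Matrix exponentials, Gibbs states, and the balanced Lindbladian -/

/-- The matrix exponential, via its power series. -/
noncomputable def mexp {I : Type} [Fintype I] [DecidableEq I] (A : Matrix I I ℂ) :
    Matrix I I ℂ :=
  ∑' k : ℕ, ((k.factorial : ℂ)⁻¹ • A ^ k)

/-- The Gibbs state `σ = e^{−βH} / tr(e^{−βH})` at inverse temperature `β`. -/
noncomputable def gibbs {I : Type} [Fintype I] [DecidableEq I] (β : ℝ) (H : Matrix I I ℂ) :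
    Matrix I I ℂ :=
  (mexp ((-β : ℂ) • H)).trace⁻¹ • mexp ((-β : ℂ) • H)

/-- The real power `A^r` of a Hermitian matrix, via its spectral decomposition. -/
noncomputable def hermPow {I : Type} [Fintype I] [DecidableEq I] (A : Matrix I I ℂ) (r : ℝ) :
    Matrix I I ℂ :=
  if h : A.IsHermitian then
    (h.eigenvectorUnitary : Matrix I I ℂ) *
      Matrix.diagonal (fun i => ((h.eigenvalues i ^ r : ℝ) : ℂ)) *
      star (h.eigenvectorUnitary : Matrix I I ℂ)
  else 0

/-- The coherent term `G^P` of the balanced Lindbladian, defined in the eigenbasis of `σ`. -/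
noncomputable def coherentG {I : Type} [Fintype I] [DecidableEq I] (σ P : Matrix I I ℂ) :
    Matrix I I ℂ :=
  if h : σ.IsHermitian then
    let U : Matrix I I ℂ := h.eigenvectorUnitary
    let lam : I → ℝ := h.eigenvalues
    let P' : Matrix I I ℂ := star U * P * U
    let w : I → I → ℝ := fun i j =>
      (lam i ^ ((1:ℝ)/2) - lam j ^ ((1:ℝ)/2)) /
        (2 * lam i ^ ((1:ℝ)/4) * lam j ^ ((1:ℝ)/4) *
          (lam i ^ ((1:ℝ)/2) + lam j ^ ((1:ℝ)/2)))
    let G' : Matrix I I ℂ := Matrix.of (fun i j =>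
      (-Complex.I) * ((w i j : ℝ) : ℂ) *
        (∑ t, ((lam t ^ ((1:ℝ)/2) : ℝ) : ℂ) * P' i t * P' t j))
    U * G' * star U
  else 0

/-- The jump operator `A^P = σ^{1/4} P σ^{−1/4}`. -/
noncomputable def jumpA {I : Type} [Fintype I] [DecidableEq I] (σ P : Matrix I I ℂ) :
    Matrix I I ℂ :=
  hermPow σ ((1:ℝ)/4) * P * hermPow σ (-((1:ℝ)/4))

/-- The Lindblad generator `ρ ↦ −i[G,ρ] + AρA† − ½{A†A, ρ}` as a linear endomorphism. -/
noncomputable def lindbladOp {I : Type} [Fintype I] [DecidableEq I] (G A : Matrix I I ℂ) :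
    Module.End ℂ (Matrix I I ℂ) :=
  (-Complex.I) • (LinearMap.mulLeft ℂ G - LinearMap.mulRight ℂ G)
    + (LinearMap.mulRight ℂ (star A)) ∘ₗ (LinearMap.mulLeft ℂ A)
    - ((1:ℂ)/2) • (LinearMap.mulLeft ℂ (star A * A) + LinearMap.mulRight ℂ (star A * A))

/-- The balanced Lindbladian `L^P` for jump `P` with invariant state `σ`. -/
noncomputable def LP {I : Type} [Fintype I] [DecidableEq I] (σ P : Matrix I I ℂ) :
    Module.End ℂ (Matrix I I ℂ) :=
  lindbladOp (coherentG σ P) (jumpA σ P)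

/-- The three nonidentity single-qubit Pauli matrices. -/
noncomputable def pauli1 : Fin 3 → Matrix (Fin 2) (Fin 2) ℂ :=
  ![!![0, 1; 1, 0], !![0, -Complex.I; Complex.I, 0], !![1, 0; 0, -1]]

/-- The Pauli matrix `σ_p` acting at site `j` of an `n`-qubit system. -/
noncomputable def pauliAt {n : ℕ} (j : Fin n) (p : Fin 3) : QMat n :=
  fun a b => (if ∀ l, l ≠ j → a l = b l then 1 else 0) * pauli1 p (a j) (b j)

/-- The site-`j` balanced Lindbladian `L_j* = Σ_{P ∈ P_j} L^P`. -/
noncomputable def siteL {n : ℕ} (σ : QMat n) (j : Fin n) : Module.End ℂ (QMat n) :=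
  ∑ p : Fin 3, LP σ (pauliAt j p)

/-- The balanced Lindbladian `L* = Σ_j L_j*`. -/
noncomputable def fullL {n : ℕ} (σ : QMat n) : Module.End ℂ (QMat n) :=
  ∑ j, siteL σ j

/-- The quantum dynamical semigroup `e^{L}` generated by a Lindbladian, applied to a state. -/
noncomputable def superExp {n : ℕ} (L : Module.End ℂ (QMat n)) (ρ : QMat n) : QMat n :=
  ∑' k : ℕ, ((k.factorial : ℂ)⁻¹ • (L ^ k) ρ)

/-! ### Entropic quantities -/

/-- The von Neumann entropy `S(ρ) = −tr(ρ log ρ)` of a (Hermitian) matrix. -/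
noncomputable def vnEntropy {I : Type} [Fintype I] [DecidableEq I] (ρ : Matrix I I ℂ) : ℝ :=
  if h : ρ.IsHermitian then -∑ i, h.eigenvalues i * Real.log (h.eigenvalues i) else 0

/-- The reduced operator on the subsystem `S`: the partial trace over the complement of `S`. -/
noncomputable def reduceTo {n : ℕ} (S : Finset (Fin n)) (X : QMat n) :
    Matrix ({j : Fin n // j ∈ S} → Fin 2) ({j : Fin n // j ∈ S} → Fin 2) ℂ :=
  fun a b => ∑ c : {j : Fin n // j ∉ S} → Fin 2,
    X (fun j => if h : j ∈ S then a ⟨j, h⟩ else c ⟨j, h⟩)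
      (fun j => if h : j ∈ S then b ⟨j, h⟩ else c ⟨j, h⟩)

/-! Since `σ ∝ e^{-βH}`, the (Mathlib-chosen) eigenbasis of `σ` also diagonalizes
`H = c - β⁻¹ log σ`, say `H = diag ν`. In that basis conjugation by `e^{iHω}` multiplies the
`(i,j)` entry by `e^{iω(ν_i - ν_j)}`, so the integral multiplies the `(i,j)` entry
`(σ_j^{-1/2} - σ_i^{-1/2}) Σ_k σ_k^{1/2} P_ik P_kj / 2i` of the commutator by the Fourier
transform of `f` at `ν_i - ν_j`, namely `1 / (2 cosh (β (ν_i - ν_j) / 4))`. This transform is a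
Beta integral `B(1/2 + ic, 1/2 - ic) = π / cosh (π c)` after the substitution `x = sigmoid t`.
Finally `e^{β (ν_i - ν_j) / 4} = (σ_j / σ_i)^{1/4}`, which turns the product of the two factors
into `-i` times the weight of `G^P`. -/

attribute [local instance] Matrix.normedAddCommGroup Matrix.normedSpace

section SechFourierTransform
open MeasureTheory Set

lemma Complex.betaIntegral_half_add_mul_I_half_sub_mul_I (c : ℝ) :
    Complex.betaIntegral (1 / 2 + c * Complex.I) (1 / 2 - c * Complex.I) =
      Real.pi / Real.cosh (Real.pi * c) := by
  have hΓ := Complex.Gamma_mul_Gamma_eq_betaIntegral (s := 1 / 2 + c * Complex.I)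
    (t := 1 / 2 - c * Complex.I) (by simp) (by simp)
  have hsin : Complex.sin (Real.pi * (1 / 2 + c * Complex.I)) = Real.cosh (Real.pi * c) := by
    rw [mul_add, ← mul_assoc, Complex.sin_add, mul_one_div, Complex.sin_pi_div_two,
      Complex.cos_pi_div_two, Complex.cos_mul_I]
    push_cast
    ring
  rw [show (1 / 2 - c * Complex.I : ℂ) = 1 - (1 / 2 + c * Complex.I) by ring] at hΓ ⊢
  rw [Complex.Gamma_mul_Gamma_one_sub, hsin, add_sub_cancel, Complex.Gamma_one, one_mul] at hΓ
  exact hΓ.symm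

lemma abs_deriv_sigmoid_smul_betaIntegrand (c t : ℝ) :
    |Real.sigmoid t * (1 - Real.sigmoid t)| •
        ((Real.sigmoid t : ℂ) ^ (1 / 2 + c * Complex.I - 1) *
          (1 - (Real.sigmoid t : ℂ)) ^ (1 / 2 - c * Complex.I - 1)) =
      Complex.exp (c * t * Complex.I) / (2 * Real.cosh (t / 2)) := by
  have hx : 0 < Real.sigmoid t := Real.sigmoid_pos t
  have hy : 0 < 1 - Real.sigmoid t := by rw [← Real.sigmoid_neg]; exact Real.sigmoid_pos _
  have hlog : Real.log (1 - Real.sigmoid t) = Real.log (Real.sigmoid t) - t := by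
    rw [← Real.sigmoid_neg, ← Real.sigmoid_mul_rexp_neg, Real.log_mul hx.ne' (Real.exp_pos _).ne',
      Real.log_exp]
    ring
  have hexponent : ((Real.log (Real.sigmoid t) : ℝ) : ℂ) * (1 / 2 + c * Complex.I - 1) +
      ((Real.log (Real.sigmoid t) - t : ℝ) : ℂ) * (1 / 2 - c * Complex.I - 1) =
      ((t / 2 - Real.log (Real.sigmoid t) : ℝ) : ℂ) + c * t * Complex.I := by
    push_cast
    ring
  have hcosh : Real.sigmoid t * Real.exp (-(t / 2)) * (2 * Real.cosh (t / 2)) = 1 := by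
    rw [Real.cosh_eq, Real.sigmoid_def, mul_assoc, ← mul_one_div, mul_div_cancel₀ _ two_ne_zero,
      mul_add, ← Real.exp_add, ← Real.exp_add]
    field_simp
    ring_nf
    rw [Real.exp_zero]
  have hmodulus : Real.sigmoid t * (1 - Real.sigmoid t) *
      Real.exp (t / 2 - Real.log (Real.sigmoid t)) = (2 * Real.cosh (t / 2))⁻¹ := by
    have hhalf : Real.exp (-t) * Real.exp (t / 2) = Real.exp (-(t / 2)) := by
      rw [← Real.exp_add]
      ring_nf
    rw [← eq_inv_of_mul_eq_one_left hcosh, ← Real.sigmoid_neg, ← Real.sigmoid_mul_rexp_neg,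
      Real.exp_sub, Real.exp_log hx, ← hhalf]
    field_simp
  rw [abs_of_pos (mul_pos hx hy), Complex.real_smul,
    show (1 - (Real.sigmoid t : ℂ)) = ((1 - Real.sigmoid t : ℝ) : ℂ) by push_cast; ring,
    Complex.cpow_def_of_ne_zero (by exact_mod_cast hx.ne'),
    Complex.cpow_def_of_ne_zero (by exact_mod_cast hy.ne'),
    ← Complex.ofReal_log hx.le, ← Complex.ofReal_log hy.le, hlog, ← Complex.exp_add, hexponent,
    Complex.exp_add, ← Complex.ofReal_exp, ← mul_assoc, ← Complex.ofReal_mul, hmodulus]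
  push_cast
  ring

lemma integrable_cexp_mul_div_two_cosh_half (c : ℝ) :
    Integrable fun t : ℝ => Complex.exp (c * t * Complex.I) / (2 * Real.cosh (t / 2)) := by
  have hbeta : IntegrableOn (fun x : ℝ => (x : ℂ) ^ (1 / 2 + c * Complex.I - 1) *
      (1 - (x : ℂ)) ^ (1 / 2 - c * Complex.I - 1)) (Real.sigmoid '' univ) := by
    rw [image_univ, Real.range_sigmoid]
    exact ((intervalIntegrable_iff_integrableOn_Ioc_of_le zero_le_one).1
      (Complex.betaIntegral_convergent (by simp) (by simp))).mono_set Ioo_subset_Ioc_self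
  rw [integrableOn_image_iff_integrableOn_abs_deriv_smul MeasurableSet.univ
    (fun t _ => (Real.hasDerivAt_sigmoid t).hasDerivWithinAt) Real.sigmoid_injective.injOn,
    integrableOn_univ] at hbeta
  simpa only [abs_deriv_sigmoid_smul_betaIntegrand] using hbeta

lemma integral_cexp_mul_div_two_cosh_half (c : ℝ) :
    ∫ t : ℝ, Complex.exp (c * t * Complex.I) / (2 * Real.cosh (t / 2)) =
      Real.pi / Real.cosh (Real.pi * c) := by
  have hsubst := integral_image_eq_integral_abs_deriv_smul MeasurableSet.univ
    (fun t _ => (Real.hasDerivAt_sigmoid t).hasDerivWithinAt) Real.sigmoid_injective.injOn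
    (fun x : ℝ => (x : ℂ) ^ (1 / 2 + c * Complex.I - 1) *
      (1 - (x : ℂ)) ^ (1 / 2 - c * Complex.I - 1))
  rw [image_univ, Real.range_sigmoid, Measure.restrict_univ] at hsubst
  simp only [abs_deriv_sigmoid_smul_betaIntegrand] at hsubst
  rw [← hsubst, ← integral_Ioc_eq_integral_Ioo, ← intervalIntegral.integral_of_le zero_le_one,
    ← Complex.betaIntegral, Complex.betaIntegral_half_add_mul_I_half_sub_mul_I]

lemma sech_weight_mul_cexp_eq {β : ℝ} (hβ : β ≠ 0) (a ω : ℝ) :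
    ((1 / (β * Real.cosh (2 * Real.pi * ω / β)) : ℝ) : ℂ) * Complex.exp (Complex.I * ω * a) =
      (2 / β : ℝ) * (Complex.exp ((a * β / (4 * Real.pi) : ℝ) * (4 * Real.pi / β * ω : ℝ) *
        Complex.I) / (2 * Real.cosh ((4 * Real.pi / β * ω) / 2))) := by
  have hcosh : Real.cosh ((4 * Real.pi / β * ω) / 2) = Real.cosh (2 * Real.pi * ω / β) := by
    congr 1
    ring
  have hexp : ((a * β / (4 * Real.pi) : ℝ) : ℂ) * (4 * Real.pi / β * ω : ℝ) * Complex.I =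
      Complex.I * ω * a := by
    have : (β : ℂ) ≠ 0 := by exact_mod_cast hβ
    push_cast
    field_simp
  rw [hcosh, hexp]
  push_cast
  field_simp

lemma integrable_sech_weight_mul_cexp {β : ℝ} (hβ : β ≠ 0) (a : ℝ) :
    Integrable fun ω : ℝ =>
      ((1 / (β * Real.cosh (2 * Real.pi * ω / β)) : ℝ) : ℂ) * Complex.exp (Complex.I * ω * a) := by
  simp_rw [sech_weight_mul_cexp_eq hβ]
  exact ((integrable_cexp_mul_div_two_cosh_half _).comp_mul_left' (by positivity)).const_mul _

lemma integral_sech_weight_mul_cexp {β : ℝ} (hβ : 0 < β) (a : ℝ) :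
    ∫ ω : ℝ, ((1 / (β * Real.cosh (2 * Real.pi * ω / β)) : ℝ) : ℂ) *
      Complex.exp (Complex.I * ω * a) = ((2 * Real.cosh (β * a / 4))⁻¹ : ℝ) := by
  simp_rw [sech_weight_mul_cexp_eq hβ.ne']
  rw [integral_const_mul, Measure.integral_comp_mul_left
      (fun t : ℝ => Complex.exp ((a * β / (4 * Real.pi) : ℝ) * t * Complex.I) /
        (2 * Real.cosh (t / 2))),
    integral_cexp_mul_div_two_cosh_half]
  have hcosh : Real.pi * (a * β / (4 * Real.pi)) = β * a / 4 := by
    field_simp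
  rw [hcosh, abs_of_pos (by positivity), Complex.real_smul]
  push_cast
  field_simp
  ring

end SechFourierTransform

section ConjugationByUnitary
open Matrix Unitary

lemma eq_conjStarAlgAut_iff_mul_eq_mul {S R : Type*} [Semiring R] [StarMul R] [SMul S R]
    [IsScalarTower S R R] [SMulCommClass S R R] (w : unitary R) (X Y : R) :
    X = conjStarAlgAut S R w Y ↔ X * w = w * Y := by
  rw [conjStarAlgAut_apply]
  constructor
  · rintro rfl
    rw [mul_assoc, coe_star_mul_self, mul_one]
  · intro h
    rw [← h, mul_assoc, mul_star_self_of_mem w.2, mul_one]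

variable {I : Type} [Fintype I] [DecidableEq I]

lemma diagonal_map_mul_eq_mul_diagonal_map {R : Type*} [CommRing R] [NoZeroDivisors R]
    {d l : I → R} {u : Matrix I I R} (h : diagonal d * u = u * diagonal l) (ψ : R → R) :
    diagonal (fun k => ψ (d k)) * u = u * diagonal fun i => ψ (l i) := by
  ext k i
  have hki := congrFun (congrFun h k) i
  simp only [diagonal_mul, mul_diagonal] at hki ⊢
  rcases eq_or_ne (u k i) 0 with hu | hu
  · simp [hu]
  · rw [mul_comm, mul_right_cancel₀ hu (hki.trans (mul_comm _ _))]

lemma conjStarAlgAut_diagonal_map_eq {U V : unitary (Matrix I I ℂ)} {d l : I → ℂ}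
    (h : conjStarAlgAut ℂ _ U (diagonal d) = conjStarAlgAut ℂ _ V (diagonal l)) (ψ : ℂ → ℂ) :
    conjStarAlgAut ℂ _ U (diagonal fun k => ψ (d k)) =
      conjStarAlgAut ℂ _ V (diagonal fun i => ψ (l i)) := by
  have hV : V = U * (star U * V) := by rw [← mul_assoc, mul_star_self, one_mul]
  rw [hV, conjStarAlgAut_mul_apply] at h ⊢
  replace h := (conjStarAlgAut ℂ _ U).injective h
  congr 1
  rw [eq_conjStarAlgAut_iff_mul_eq_mul] at h ⊢
  exact diagonal_map_mul_eq_mul_diagonal_map h ψ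

lemma conjStarAlgAut_diagonal_commutator (U : unitary (Matrix I I ℂ)) (a b : I → ℂ)
    (P : Matrix I I ℂ) :
    P * conjStarAlgAut ℂ _ U (diagonal a) * P * conjStarAlgAut ℂ _ U (diagonal b) -
        conjStarAlgAut ℂ _ U (diagonal b) * P * conjStarAlgAut ℂ _ U (diagonal a) * P =
      conjStarAlgAut ℂ _ U (of fun i j => (b j - b i) *
        ∑ t, a t * (conjStarAlgAut ℂ _ U).symm P i t * (conjStarAlgAut ℂ _ U).symm P t j) := by
  set Q := (conjStarAlgAut ℂ _ U).symm P
  rw [show P = conjStarAlgAut ℂ _ U Q from ((conjStarAlgAut ℂ _ U).apply_symm_apply P).symm]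
  simp only [← map_mul, ← map_sub]
  rw [show diagonal b * Q * diagonal a * Q = diagonal b * (Q * diagonal a * Q) by
    simp only [Matrix.mul_assoc]]
  congr 1
  ext i j
  rw [Matrix.sub_apply, mul_diagonal, diagonal_mul, mul_apply, of_apply]
  simp only [mul_diagonal, Finset.mul_sum, Finset.sum_mul, ← Finset.sum_sub_distrib]
  exact Finset.sum_congr rfl fun t _ => by ring

lemma mexp_eq_exp (A : Matrix I I ℂ) : mexp A = NormedSpace.exp A := by
  rw [NormedSpace.exp_eq_tsum ℂ]
  rfl

lemma mexp_conjStarAlgAut_diagonal (U : unitary (Matrix I I ℂ)) (d : I → ℂ) :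
    mexp (conjStarAlgAut ℂ _ U (diagonal d)) =
      conjStarAlgAut ℂ _ U (diagonal fun i => Complex.exp (d i)) := by
  have hinv : (U : Matrix I I ℂ)⁻¹ = star (U : Matrix I I ℂ) :=
    inv_eq_left_inv (coe_star_mul_self U)
  simp only [conjStarAlgAut_apply, mexp_eq_exp, ← hinv]
  rw [Matrix.exp_conj _ _ isUnit_coe, Matrix.exp_diagonal, Pi.exp_def]
  simp only [Complex.exp_eq_exp_ℂ]

lemma mexp_smul_mul_mul_mexp_neg_smul {H : Matrix I I ℂ} {U : unitary (Matrix I I ℂ)}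
    {ν : I → ℂ} (hH : H = conjStarAlgAut ℂ _ U (diagonal ν)) (θ : ℂ) (N : Matrix I I ℂ) :
    mexp (θ • H) * conjStarAlgAut ℂ _ U N * mexp ((-θ) • H) =
      conjStarAlgAut ℂ _ U (of fun i j => Complex.exp (θ * (ν i - ν j)) * N i j) := by
  subst hH
  simp only [← map_smul, ← diagonal_smul, mexp_conjStarAlgAut_diagonal, ← map_mul]
  congr 1
  ext i j
  simp only [diagonal_mul, mul_diagonal, Pi.smul_apply, smul_eq_mul, of_apply]
  rw [mul_right_comm, ← Complex.exp_add]
  ring_nf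

end ConjugationByUnitary

section MatrixIntegral
open Matrix MeasureTheory Unitary
variable {I : Type} [Fintype I] [DecidableEq I]

lemma integral_map_matrix_of {α : Type*} [MeasurableSpace α] {μ : Measure α} {F : Type*}
    [FunLike F (Matrix I I ℂ) (Matrix I I ℂ)] [LinearMapClass F ℂ (Matrix I I ℂ) (Matrix I I ℂ)]
    (L : F) {f : I → I → α → ℂ} (hf : ∀ i j, Integrable (f i j) μ) :
    ∫ x, L (of fun i j => f i j x) ∂μ = L (of fun i j => ∫ x, f i j x ∂μ) := by
  have hsum : ∀ M : Matrix I I ℂ, L M = ∑ i, ∑ j, M i j • L (single i j 1) := by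
    intro M
    conv_lhs => rw [matrix_eq_sum_single M]
    simp only [map_sum, ← map_smul, smul_single, smul_eq_mul, mul_one]
  have hintegrand : (fun x => L (of fun i j => f i j x)) =
      fun x => ∑ i, ∑ j, f i j x • L (single i j 1) := funext fun x => hsum _
  rw [hintegrand, hsum]
  simp only [of_apply]
  rw [integral_finsetSum _ fun i _ => integrable_finsetSum _ fun j _ => (hf i j).smul_const _]
  refine Finset.sum_congr rfl fun i _ => ?_
  rw [integral_finsetSum _ fun j _ => (hf i j).smul_const _]
  exact Finset.sum_congr rfl fun j _ => integral_smul_const _ _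

lemma integral_smul_mexp_mul_mul_mexp_neg_smul {H : Matrix I I ℂ} {U : unitary (Matrix I I ℂ)}
    {ν : I → ℝ} (hH : H = conjStarAlgAut ℂ _ U (diagonal fun i => (ν i : ℂ)))
    (N : Matrix I I ℂ) {φ : ℝ → ℝ}
    (hφ : ∀ a : ℝ, Integrable fun ω : ℝ => (φ ω : ℂ) * Complex.exp (Complex.I * ω * a)) :
    ∫ ω : ℝ, φ ω • (mexp ((Complex.I * ω) • H) * conjStarAlgAut ℂ _ U N *
        mexp ((-(Complex.I * ω)) • H)) =
      conjStarAlgAut ℂ _ U (of fun i j =>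
        (∫ ω : ℝ, (φ ω : ℂ) * Complex.exp (Complex.I * ω * (ν i - ν j : ℝ))) * N i j) := by
  have hpointwise : ∀ ω : ℝ, φ ω • (mexp ((Complex.I * ω) • H) * conjStarAlgAut ℂ _ U N *
      mexp ((-(Complex.I * ω)) • H)) = conjStarAlgAut ℂ _ U (of fun i j =>
        (φ ω : ℂ) * Complex.exp (Complex.I * ω * (ν i - ν j : ℝ)) * N i j) := by
    intro ω
    rw [mexp_smul_mul_mul_mexp_neg_smul hH, ← Complex.coe_smul, ← map_smul]
    congr 1
    ext i j
    simp only [of_apply, Matrix.smul_apply, smul_eq_mul]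
    push_cast
    ring
  simp only [hpointwise]
  rw [integral_map_matrix_of (f := fun i j ω =>
    (φ ω : ℂ) * Complex.exp (Complex.I * ω * (ν i - ν j : ℝ)) * N i j) _
    fun i j => (hφ _).mul_const _]
  simp only [integral_mul_const]

end MatrixIntegral

section GibbsState
open Matrix Unitary
variable {I : Type} [Fintype I] [DecidableEq I]

lemma gibbs_eq_conjStarAlgAut {H : Matrix I I ℂ} (hH : H.IsHermitian) (β : ℝ) :
    gibbs β H = conjStarAlgAut ℂ _ hH.eigenvectorUnitary (diagonal fun k =>
      ((Real.exp (-β * hH.eigenvalues k) / ∑ l, Real.exp (-β * hH.eigenvalues l) : ℝ) : ℂ)) := by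
  have hexp : mexp ((-β : ℂ) • H) = conjStarAlgAut ℂ _ hH.eigenvectorUnitary
      (diagonal fun k => ((Real.exp (-β * hH.eigenvalues k) : ℝ) : ℂ)) := by
    conv_lhs => rw [hH.spectral_theorem]
    rw [← map_smul, ← diagonal_smul, mexp_conjStarAlgAut_diagonal]
    congr 2
    ext k
    simp
  have htrace : (mexp ((-β : ℂ) • H)).trace =
      ((∑ l, Real.exp (-β * hH.eigenvalues l) : ℝ) : ℂ) := by
    rw [hexp, conjStarAlgAut_apply, trace_mul_cycle, coe_star_mul_self, Matrix.one_mul,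
      trace_diagonal]
    push_cast
    rfl
  rw [gibbs, htrace, hexp, ← map_smul, ← diagonal_smul]
  congr 2
  ext k
  simp [div_eq_inv_mul]

lemma gibbs_posDef {H : Matrix I I ℂ} (hH : H.IsHermitian) (β : ℝ) : (gibbs β H).PosDef := by
  rw [gibbs_eq_conjStarAlgAut hH, conjStarAlgAut_apply, isUnit_coe.posDef_star_right_conjugate_iff,
    posDef_diagonal_iff]
  intro k
  have hZ : Real.exp (-β * hH.eigenvalues k) ≤ ∑ l, Real.exp (-β * hH.eigenvalues l) :=
    Finset.single_le_sum (f := fun l => Real.exp (-β * hH.eigenvalues l))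
      (fun l _ => (Real.exp_pos _).le) (Finset.mem_univ k)
  exact_mod_cast div_pos (Real.exp_pos _) ((Real.exp_pos _).trans_le hZ)

lemma hamiltonian_eq_conjStarAlgAut_log_gibbs {H : Matrix I I ℂ} (hH : H.IsHermitian) {β : ℝ}
    (hβ : β ≠ 0) (hσ : (gibbs β H).IsHermitian) :
    ∃ c : ℝ, H = conjStarAlgAut ℂ _ hσ.eigenvectorUnitary
      (diagonal fun i => ((c - Real.log (hσ.eigenvalues i) / β : ℝ) : ℂ)) := by
  set Z := ∑ l, Real.exp (-β * hH.eigenvalues l)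
  refine ⟨-Real.log Z / β, ?_⟩
  have hspec := (gibbs_eq_conjStarAlgAut hH β).symm.trans hσ.spectral_theorem
  have hlog := conjStarAlgAut_diagonal_map_eq hspec
    (fun z => ((-Real.log Z / β - Real.log z.re / β : ℝ) : ℂ))
  conv_lhs => rw [hH.spectral_theorem]
  convert hlog using 3
  · rfl
  · funext k
    have hZ : 0 < Z := (Real.exp_pos _).trans_le (Finset.single_le_sum
      (f := fun l => Real.exp (-β * hH.eigenvalues l)) (fun l _ => (Real.exp_pos _).le)
      (Finset.mem_univ k))
    have hE : -Real.log Z / β - Real.log (Real.exp (-β * hH.eigenvalues k) / Z) / β =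
        hH.eigenvalues k := by
      rw [Real.log_div (Real.exp_pos _).ne' hZ.ne', Real.log_exp]
      field_simp
      ring
    simp only [Function.comp_apply, Complex.ofReal_re]
    exact congrArg Complex.ofReal hE.symm
  · funext i
    simp

end GibbsState

section CoherentTerm
open Matrix Unitary
variable {I : Type} [Fintype I] [DecidableEq I]

lemma hermPow_eq_conjStarAlgAut {A : Matrix I I ℂ} (hA : A.IsHermitian) (r : ℝ) :
    hermPow A r = conjStarAlgAut ℂ _ hA.eigenvectorUnitary
      (diagonal fun i => ((hA.eigenvalues i ^ r : ℝ) : ℂ)) := by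
  rw [hermPow, dif_pos hA]
  rfl

def coherentWeight (x y : ℝ) : ℝ :=
  (x ^ ((1:ℝ)/2) - y ^ ((1:ℝ)/2)) /
    (2 * x ^ ((1:ℝ)/4) * y ^ ((1:ℝ)/4) * (x ^ ((1:ℝ)/2) + y ^ ((1:ℝ)/2)))

lemma coherentG_eq_conjStarAlgAut {σ : Matrix I I ℂ} (hσ : σ.IsHermitian) (P : Matrix I I ℂ) :
    coherentG σ P = conjStarAlgAut ℂ _ hσ.eigenvectorUnitary (of fun i j =>
      -Complex.I * coherentWeight (hσ.eigenvalues i) (hσ.eigenvalues j) *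
        ∑ t, ((hσ.eigenvalues t ^ ((1:ℝ)/2) : ℝ) : ℂ) *
          (conjStarAlgAut ℂ _ hσ.eigenvectorUnitary).symm P i t *
          (conjStarAlgAut ℂ _ hσ.eigenvectorUnitary).symm P t j) := by
  rw [coherentG, dif_pos hσ]
  rfl

lemma neg_I_mul_coherentWeight {x y : ℝ} (hx : 0 < x) (hy : 0 < y) :
    -Complex.I * coherentWeight x y =
      ((2 * Real.cosh ((Real.log y - Real.log x) / 4))⁻¹ : ℝ) *
        ((2 * Complex.I)⁻¹ * ((y ^ (-((1:ℝ)/2)) : ℝ) - (x ^ (-((1:ℝ)/2)) : ℝ))) := by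
  have hhalf : ∀ z : ℝ, 0 < z → z ^ ((1:ℝ)/2) = (z ^ ((1:ℝ)/4)) ^ 2 := fun z hz => by
    rw [← Real.rpow_natCast, ← Real.rpow_mul hz.le]
    norm_num
  have hquarter : ∀ z : ℝ, 0 < z → Real.exp (Real.log z / 4) = z ^ ((1:ℝ)/4) := fun z hz => by
    rw [Real.rpow_def_of_pos hz]
    ring_nf
  have hcosh : Real.cosh ((Real.log y - Real.log x) / 4) =
      (y ^ ((1:ℝ)/4) / x ^ ((1:ℝ)/4) + x ^ ((1:ℝ)/4) / y ^ ((1:ℝ)/4)) / 2 := by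
    rw [Real.cosh_eq, ← neg_div, neg_sub, sub_div, sub_div, Real.exp_sub, Real.exp_sub,
      hquarter x hx, hquarter y hy]
  have hreal : (2 * Real.cosh ((Real.log y - Real.log x) / 4))⁻¹ *
      (y ^ (-((1:ℝ)/2)) - x ^ (-((1:ℝ)/2))) = 2 * coherentWeight x y := by
    rw [hcosh, coherentWeight, Real.rpow_neg hx.le, Real.rpow_neg hy.le, hhalf x hx, hhalf y hy]
    field_simp
    ring
  have hI : (2 * Complex.I)⁻¹ = -Complex.I / 2 := by
    rw [mul_inv, Complex.inv_I]
    ring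
  have hcast := congrArg Complex.ofReal hreal
  push_cast at hcast ⊢
  rw [hI]
  linear_combination (Complex.I / 2) * hcast

end CoherentTerm

open MeasureTheory in
theorem fourier_transform_coherent_term_general
    (I : Type) [Fintype I] [DecidableEq I]
    (H : Matrix I I ℂ) (hH : H.IsHermitian)
    (β : ℝ) (hβ : 0 < β)
    (P : Matrix I I ℂ) :
    coherentG (gibbs β H) P =
      ∫ ω : ℝ, (1 / (β * Real.cosh (2 * Real.pi * ω / β))) •
        (mexp ((Complex.I * (ω : ℂ)) • H) *
          ((2 * Complex.I)⁻¹ •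
            (P * hermPow (gibbs β H) ((1:ℝ)/2) * P * hermPow (gibbs β H) (-((1:ℝ)/2))
              - hermPow (gibbs β H) (-((1:ℝ)/2)) * P * hermPow (gibbs β H) ((1:ℝ)/2) * P)) *
          mexp ((-(Complex.I * (ω : ℂ))) • H)) := by
  have hσ := (gibbs_posDef hH β).isHermitian
  have hpos : ∀ i, 0 < hσ.eigenvalues i := (gibbs_posDef hH β).eigenvalues_pos
  obtain ⟨c, hHc⟩ := hamiltonian_eq_conjStarAlgAut_log_gibbs hH hβ.ne' hσ
  rw [hermPow_eq_conjStarAlgAut hσ, hermPow_eq_conjStarAlgAut hσ,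
    conjStarAlgAut_diagonal_commutator, ← map_smul,
    integral_smul_mexp_mul_mul_mexp_neg_smul hHc _ (integrable_sech_weight_mul_cexp hβ.ne'),
    coherentG_eq_conjStarAlgAut hσ]
  congr 1
  ext i j
  have harg : β * ((c - Real.log (hσ.eigenvalues i) / β) - (c - Real.log (hσ.eigenvalues j) / β)) /
      4 = (Real.log (hσ.eigenvalues j) - Real.log (hσ.eigenvalues i)) / 4 := by
    field_simp
    ring
  simp only [Matrix.of_apply, Matrix.smul_apply, smul_eq_mul, integral_sech_weight_mul_cexp hβ,
    harg, neg_I_mul_coherentWeight (hpos i) (hpos j)]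
  ring

open MeasureTheory in
/-- **Fourier transform expression for the coherent term**:
`G^P = ∫ e^{iHω} ((1/2i)[P σ^{1/2} P, σ^{−1/2}]) e^{−iHω} f(ω) dω` with
`f(ω) = 1/(β cosh(2πω/β))`. -/
theorem fourier_transform_coherent_term
    (I : Type) [Fintype I] [DecidableEq I]
    (H : Matrix I I ℂ) (hH : H.IsHermitian)
    (β : ℝ) (hβ : 0 < β)
    (P : Matrix I I ℂ) (hP : P.IsHermitian) :
    coherentG (gibbs β H) P =
      ∫ ω : ℝ, (1 / (β * Real.cosh (2 * Real.pi * ω / β))) •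
        (mexp ((Complex.I * (ω : ℂ)) • H) *
          ((2 * Complex.I)⁻¹ •
            (P * hermPow (gibbs β H) ((1:ℝ)/2) * P * hermPow (gibbs β H) (-((1:ℝ)/2))
              - hermPow (gibbs β H) (-((1:ℝ)/2)) * P * hermPow (gibbs β H) ((1:ℝ)/2) * P)) *
          mexp ((-(Complex.I * (ω : ℂ))) • H)) :=
  fourier_transform_coherent_term_general I H hH β hβ P

end
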